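/- The 3n points P_{l,m}, for l ∈ {0,1,2} and m ∈ {0,1,…,n−1}, are pairwise distinct; consequently, for i ≠ j the intersection E_i ∩ E_j is a finite set of cardinality exactly 3n. -/
import Mathlib


open Complex

noncomputable def ρ : ℂ := Complex.exp (2 * Real.pi * Complex.I / 3)

noncomputable def a : ℂ := (1 - ρ) / 3

noncomputable def Δn (n : ℕ) : AddSubgroup ℂ := AddSubgroup.closure {(n : ℂ), 1 - ρ}

noncomputable def Δ : AddSubgroup ℂ := AddSubgroup.closure {1, ρ}

abbrev G : Type := ℂ ⧸ Δ

abbrev Gn (n : ℕ) : Type := ℂ ⧸ Δn n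

abbrev An (n : ℕ) : Type := G × Gn n

noncomputable def mkG : ℂ → G := QuotientAddGroup.mk

noncomputable def mkGn (n : ℕ) : ℂ → Gn n := QuotientAddGroup.mk

/-- The curve E₁ = {([z], [z]ₙ)}. -/
noncomputable def E1 (n : ℕ) : Set (An n) := {p | ∃ z : ℂ, p = (mkG z, mkGn n z)}

/-- The curve E₂ = {([ρz − a], [z]ₙ)}. -/
noncomputable def E2 (n : ℕ) : Set (An n) := {p | ∃ z : ℂ, p = (mkG (ρ * z - a), mkGn n z)}

/-- The curve E₃ = {([ρ²z − 2a], [z]ₙ)}. -/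
noncomputable def E3 (n : ℕ) : Set (An n) := {p | ∃ z : ℂ, p = (mkG (ρ ^ 2 * z - 2 * a), mkGn n z)}

/-- The point P_{l,m} = ([2/3 + l·a], [2/3 + l·a + m]ₙ). -/
noncomputable def P (n : ℕ) (l : Fin 3) (m : Fin n) : An n :=
  (mkG (2 / 3 + (l.val : ℂ) * a), mkGn n (2 / 3 + (l.val : ℂ) * a + (m.val : ℂ)))



lemma hρ3 : ρ ^ 3 = 1 := by
  rw [ρ, ← Complex.exp_nat_mul]
  rw [show (3:ℕ) * (2 * Real.pi * Complex.I / 3) = 2 * Real.pi * Complex.I by push_cast; ring]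
  exact Complex.exp_two_pi_mul_I

lemma hρne : ρ ≠ 1 := by
  intro h
  rw [ρ, Complex.exp_eq_one_iff] at h
  obtain ⟨k, hk⟩ := h
  have hπ : (Real.pi : ℂ) ≠ 0 := by exact_mod_cast Real.pi_ne_zero
  have h2 : (2 * Real.pi * Complex.I : ℂ) ≠ 0 := by
    simp [Complex.I_ne_zero, hπ]
  have h3 : ((3 * k : ℤ) : ℂ) * (2 * Real.pi * Complex.I) = 1 * (2 * Real.pi * Complex.I) := by
    push_cast
    linear_combination (-3) * hk
  have : ((3 * k : ℤ) : ℂ) = 1 := mul_right_cancel₀ h2 h3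
  have : (3 * k : ℤ) = 1 := by exact_mod_cast this
  omega

lemma hρsq : ρ ^ 2 = -1 - ρ := by
  have h : (ρ - 1) * (ρ ^ 2 + ρ + 1) = 0 := by linear_combination hρ3
  rcases mul_eq_zero.1 h with h | h
  · exact absurd (sub_eq_zero.1 h) hρne
  · linear_combination h

lemma hρim : ρ.im ≠ 0 := by
  have h : ρ = Complex.exp ((2 * Real.pi / 3 : ℝ) * Complex.I) := by
    rw [ρ]; push_cast; ring_nf
  rw [h, Complex.exp_ofReal_mul_I_im]
  have h1 : (0:ℝ) < 2 * Real.pi / 3 := by positivity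
  have h2 : 2 * Real.pi / 3 < Real.pi := by linarith [Real.pi_pos]
  exact ne_of_gt (Real.sin_pos_of_pos_of_lt_pi h1 h2)

lemma lin_indep {x y : ℝ} (h : (x:ℂ) + y * ρ = 0) : x = 0 ∧ y = 0 := by
  have him : y * ρ.im = 0 := by
    have := congrArg Complex.im h
    simpa [Complex.add_im, Complex.mul_im] using this
  have hy : y = 0 := by
    rcases mul_eq_zero.1 him with h' | h'
    · exact h'
    · exact absurd h' hρim
  refine ⟨?_, hy⟩
  have := congrArg Complex.re h
  simpa [hy] using this


lemma mem_D {x : ℂ} : x ∈ Δ ↔ ∃ p q : ℤ, x = p + q * ρ := by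
  rw [Δ, AddSubgroup.mem_closure_pair]
  constructor
  · rintro ⟨p, q, h⟩
    exact ⟨p, q, by rw [← h]; push_cast [zsmul_eq_mul]; ring⟩
  · rintro ⟨p, q, h⟩
    exact ⟨p, q, by rw [h]; push_cast [zsmul_eq_mul]; ring⟩

lemma mem_Dn {n : ℕ} {x : ℂ} : x ∈ Δn n ↔ ∃ p q : ℤ, x = p * n + q * (1 - ρ) := by
  rw [Δn, AddSubgroup.mem_closure_pair]
  constructor
  · rintro ⟨p, q, h⟩
    exact ⟨p, q, by rw [← h]; push_cast [zsmul_eq_mul]; ring⟩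
  · rintro ⟨p, q, h⟩
    exact ⟨p, q, by rw [h]; push_cast [zsmul_eq_mul]; ring⟩

lemma int_mem_D (k : ℤ) : (k : ℂ) ∈ Δ := mem_D.2 ⟨k, 0, by push_cast; ring⟩

lemma Dn_le (n : ℕ) : Δn n ≤ Δ := by
  intro x hx
  obtain ⟨p, q, rfl⟩ := mem_Dn.1 hx
  exact mem_D.2 ⟨p * n + q, -q, by push_cast; ring⟩

lemma rho_mul_mem {x : ℂ} (hx : x ∈ Δ) : ρ * x ∈ Δ := by
  obtain ⟨p, q, rfl⟩ := mem_D.1 hx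
  exact mem_D.2 ⟨-q, p - q, by push_cast; linear_combination (q:ℂ) * hρsq⟩

lemma rho2_mul_mem {x : ℂ} (hx : x ∈ Δ) : ρ ^ 2 * x ∈ Δ := by
  rw [pow_two, mul_assoc]
  exact rho_mul_mem (rho_mul_mem hx)

lemma mkG_eq {x y : ℂ} : mkG x = mkG y ↔ y - x ∈ Δ := by
  rw [mkG, QuotientAddGroup.eq, neg_add_eq_sub]

lemma mkGn_eq {n : ℕ} {x y : ℂ} : mkGn n x = mkGn n y ↔ y - x ∈ Δn n := by
  rw [mkGn, QuotientAddGroup.eq, neg_add_eq_sub]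


lemma P_inj (n : ℕ) : Function.Injective (fun lm : Fin 3 × Fin n => P n lm.1 lm.2) := by
  rintro ⟨l, m⟩ ⟨l', m'⟩ h
  simp only [P, Prod.mk.injEq] at h
  obtain ⟨p, q, hpq⟩ := mem_Dn.1 (mkGn_eq.1 h.2)
  have key : ((((l'.val:ℝ) - l.val)/3 + ((m'.val:ℝ) - m.val) - p*n - q : ℝ) : ℂ)
      + ((-((l'.val:ℝ) - l.val)/3 + q : ℝ)) * ρ = 0 := by
    push_cast
    rw [a] at hpq
    linear_combination hpq
  obtain ⟨h1, h2⟩ := lin_indep key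
  have hq : (l'.val : ℤ) - l.val = 3 * q := by
    have : ((l'.val:ℝ) - l.val) = 3 * q := by linarith
    exact_mod_cast this
  have hp : (m'.val : ℤ) - m.val = p * n := by
    have : ((m'.val:ℝ) - m.val) = p * n := by linarith
    exact_mod_cast this
  have hl3 := l.isLt; have hl3' := l'.isLt
  have hm := m.isLt; have hm' := m'.isLt
  have hn' : 0 < (n:ℤ) := by exact_mod_cast m.pos
  have hp0 : p = 0 := by
    rcases lt_trichotomy p 0 with h | h | h
    · have := mul_le_mul_of_nonneg_right (show p ≤ -1 by omega) hn'.le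
      omega
    · exact h
    · have := mul_le_mul_of_nonneg_right (show 1 ≤ p by omega) hn'.le
      omega
  have : l.val = l'.val ∧ m.val = m'.val := by
    subst hp0
    constructor <;> omega
  ext
  · exact this.1.symm ▸ rfl
  · exact this.2.symm ▸ rfl

lemma hρ0 : ρ ^ 2 + ρ + 1 = 0 := by linear_combination hρsq

lemma P_mem_E1 (n : ℕ) (l : Fin 3) (m : Fin n) : P n l m ∈ E1 n := by
  refine ⟨2/3 + (l.val:ℂ) * a + (m.val:ℂ), ?_⟩
  rw [P, Prod.mk.injEq]
  refine ⟨mkG_eq.2 ?_, rfl⟩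
  have : (2/3 + (l.val:ℂ) * a + (m.val:ℂ)) - (2/3 + (l.val:ℂ) * a) = ((m.val:ℤ):ℂ) := by
    push_cast; ring
  rw [this]; exact int_mem_D _

lemma P_mem_E2 (n : ℕ) (l : Fin 3) (m : Fin n) : P n l m ∈ E2 n := by
  refine ⟨2/3 + (l.val:ℂ) * a + (m.val:ℂ), ?_⟩
  rw [P, Prod.mk.injEq]
  refine ⟨mkG_eq.2 ?_, rfl⟩
  refine mem_D.2 ⟨-1, 1 + l.val + m.val, ?_⟩
  rw [a]; push_cast
  linear_combination (-(l.val:ℂ)/3) * hρ0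

lemma P_mem_E3 (n : ℕ) (l : Fin 3) (m : Fin n) : P n l m ∈ E3 n := by
  refine ⟨2/3 + (l.val:ℂ) * a + (m.val:ℂ), ?_⟩
  rw [P, Prod.mk.injEq]
  refine ⟨mkG_eq.2 ?_, ?_⟩
  · refine mem_D.2 ⟨-2 - l.val - m.val, -(m.val:ℤ), ?_⟩
    rw [a]; push_cast
    linear_combination ((2/3 + 2*(l.val:ℂ)/3 + (m.val:ℂ)) + (-(l.val:ℂ)/3) * ρ) * hρ0
  · rfl

lemma point_eq_P (n : ℕ) (hn : 0 < n) (z : ℂ) (l m : ℤ)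
    (hl0 : 0 ≤ l) (hl3 : l < 3) (hm0 : 0 ≤ m) (hmn : m < n)
    (hmem : z - (2/3 + (l:ℂ) * a + (m:ℂ)) ∈ Δn n) :
    ∃ lm : Fin 3 × Fin n, P n lm.1 lm.2 = (mkG z, mkGn n z) := by
  refine ⟨(⟨l.toNat, by omega⟩, ⟨m.toNat, by omega⟩), ?_⟩
  have hlc : ((l.toNat : ℕ) : ℂ) = (l : ℂ) := by
    exact_mod_cast congrArg (fun t : ℤ => (t : ℂ)) (Int.toNat_of_nonneg hl0)
  have hmc : ((m.toNat : ℕ) : ℂ) = (m : ℂ) := by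
    exact_mod_cast congrArg (fun t : ℤ => (t : ℂ)) (Int.toNat_of_nonneg hm0)
  rw [P, Prod.mk.injEq]
  simp only [hlc, hmc]
  constructor
  · refine mkG_eq.2 ?_
    have : z - (2/3 + (l:ℂ) * a) = (z - (2/3 + (l:ℂ) * a + (m:ℂ))) + ((m:ℤ):ℂ) := by
      push_cast; ring
    rw [this]
    exact Δ.add_mem (Dn_le n hmem) (int_mem_D m)
  · exact mkGn_eq.2 hmem

lemma e12 (n : ℕ) (hn : 0 < n) :
    E1 n ∩ E2 n = Set.range (fun lm : Fin 3 × Fin n => P n lm.1 lm.2) := by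
  have hne : ρ - 1 ≠ 0 := sub_ne_zero.2 hρne
  have hnz : (0:ℤ) < (n:ℤ) := by exact_mod_cast hn
  ext x
  constructor
  · rintro ⟨⟨z, rfl⟩, w, hw⟩
    rw [Prod.mk.injEq] at hw
    have h1 : w - z ∈ Δn n := mkGn_eq.1 hw.2
    have h2 : (ρ * w - a) - z ∈ Δ := (mkG_eq.1 hw.1)
    have h3 : (ρ - 1) * z - a ∈ Δ := by
      have h4 : ρ * (w - z) ∈ Δ := rho_mul_mem (Dn_le n h1)
      have h5 := Δ.sub_mem h2 h4
      have : (ρ - 1) * z - a = ((ρ * w - a) - z) - ρ * (w - z) := by ring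
      rw [this]; exact h5
    obtain ⟨p, q, hpq⟩ := mem_D.1 h3
    have hzval : z = (-1 - 2*(p:ℂ) + q)/3 + (-((p:ℂ)+q)/3) * ρ := by
      apply mul_left_cancel₀ hne
      rw [a] at hpq
      linear_combination hpq + (((p:ℂ) + (q:ℂ))/3) * hρ0
    set l : ℤ := (p + q) % 3 with hl
    set c : ℤ := (p + q) / 3 with hc
    set m : ℤ := (-1 - p) % n with hm
    set d : ℤ := (-1 - p) / n with hd
    have hl0 : 0 ≤ l := Int.emod_nonneg _ (by norm_num)
    have hl3 : l < 3 := Int.emod_lt_of_pos _ (by norm_num)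
    have hm0 : 0 ≤ m := Int.emod_nonneg _ (by omega)
    have hmn : m < n := Int.emod_lt_of_pos _ hnz
    have hlrel : p + q = 3 * c + l := by rw [hl, hc]; omega
    have hmrel : -1 - p = (n:ℤ) * d + m := by
      rw [hm, hd]; exact (Int.mul_ediv_add_emod _ _).symm
    apply point_eq_P n hn z l m hl0 hl3 hm0 hmn
    refine mem_Dn.2 ⟨d, c, ?_⟩
    have hlC : (l:ℂ) = (p:ℂ) + q - 3*c := by
      have h' : l = p + q - 3*c := by omega
      rw [h']; push_cast; ring
    have hmC : (m:ℂ) = -1 - p - n*d := by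
      have : m = -1 - p - n*d := by omega
      rw [this]; push_cast; ring
    rw [hzval, a, hlC, hmC]; ring
  · rintro ⟨⟨l, m⟩, rfl⟩
    exact ⟨P_mem_E1 n l m, P_mem_E2 n l m⟩

lemma e13 (n : ℕ) (hn : 0 < n) :
    E1 n ∩ E3 n = Set.range (fun lm : Fin 3 × Fin n => P n lm.1 lm.2) := by
  have hne2 : ρ ^ 2 - 1 ≠ 0 := by
    intro h
    have hval : ρ = -2 := by linear_combination hρsq - h
    have h3 := hρ3
    rw [hval] at h3; norm_num at h3
  have hnz : (0:ℤ) < (n:ℤ) := by exact_mod_cast hn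
  ext x
  constructor
  · rintro ⟨⟨z, rfl⟩, w, hw⟩
    rw [Prod.mk.injEq] at hw
    have h1 : w - z ∈ Δn n := mkGn_eq.1 hw.2
    have h2 : (ρ ^ 2 * w - 2 * a) - z ∈ Δ := mkG_eq.1 hw.1
    have h3 : (ρ ^ 2 - 1) * z - 2 * a ∈ Δ := by
      have h4 : ρ ^ 2 * (w - z) ∈ Δ := rho2_mul_mem (Dn_le n h1)
      have h5 := Δ.sub_mem h2 h4
      have : (ρ ^ 2 - 1) * z - 2 * a = ((ρ ^ 2 * w - 2 * a) - z) - ρ ^ 2 * (w - z) := by ring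
      rw [this]; exact h5
    obtain ⟨p, q, hpq⟩ := mem_D.1 h3
    have hzval : z = (-(p:ℂ) - q)/3 + ((2 + (p:ℂ) - 2*q)/3) * ρ := by
      apply mul_left_cancel₀ hne2
      rw [a] at hpq
      linear_combination hpq + ((2 + 2*(p:ℂ) - q)/3 + (-(2 + (p:ℂ) - 2*q)/3) * ρ) * hρ0
    set l : ℤ := (-2 - p + 2*q) % 3 with hl
    set c : ℤ := (-2 - p + 2*q) / 3 with hc
    set m : ℤ := (-q) % n with hm
    set d : ℤ := (-q) / n with hd
    have hl0 : 0 ≤ l := Int.emod_nonneg _ (by norm_num)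
    have hl3 : l < 3 := Int.emod_lt_of_pos _ (by norm_num)
    have hm0 : 0 ≤ m := Int.emod_nonneg _ (by omega)
    have hmn : m < n := Int.emod_lt_of_pos _ hnz
    have hmrel : -q = (n:ℤ) * d + m := by
      rw [hm, hd]; exact (Int.mul_ediv_add_emod _ _).symm
    apply point_eq_P n hn z l m hl0 hl3 hm0 hmn
    refine mem_Dn.2 ⟨d, c, ?_⟩
    have hlC : (l:ℂ) = -2 - (p:ℂ) + 2*q - 3*c := by
      have h' : l = -2 - p + 2*q - 3*c := by rw [hl, hc]; omega
      rw [h']; push_cast; ring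
    have hmC : (m:ℂ) = -(q:ℂ) - n*d := by
      have h' : m = -q - n*d := by omega
      rw [h']; push_cast; ring
    rw [hzval, a, hlC, hmC]; ring
  · rintro ⟨⟨l, m⟩, rfl⟩
    exact ⟨P_mem_E1 n l m, P_mem_E3 n l m⟩

lemma point_eq_P' (n : ℕ) (hn : 0 < n) (z : ℂ) (l m : ℤ)
    (hl0 : 0 ≤ l) (hl3 : l < 3) (hm0 : 0 ≤ m) (hmn : m < n)
    (hmem : z - (2/3 + (l:ℂ) * a + (m:ℂ)) ∈ Δn n) :
    ∃ lm : Fin 3 × Fin n, P n lm.1 lm.2 = (mkG (ρ * z - a), mkGn n z) := by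
  refine ⟨(⟨l.toNat, by omega⟩, ⟨m.toNat, by omega⟩), ?_⟩
  have hlc : ((l.toNat : ℕ) : ℂ) = (l : ℂ) := by
    exact_mod_cast congrArg (fun t : ℤ => (t : ℂ)) (Int.toNat_of_nonneg hl0)
  have hmc : ((m.toNat : ℕ) : ℂ) = (m : ℂ) := by
    exact_mod_cast congrArg (fun t : ℤ => (t : ℂ)) (Int.toNat_of_nonneg hm0)
  rw [P, Prod.mk.injEq]
  simp only [hlc, hmc]
  constructor
  · refine mkG_eq.2 ?_
    have hsplit : (ρ * z - a) - (2/3 + (l:ℂ) * a) =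
        ρ * (z - (2/3 + (l:ℂ) * a + (m:ℂ)))
          + (ρ * (2/3 + (l:ℂ) * a + (m:ℂ)) - a - (2/3 + (l:ℂ) * a)) := by ring
    rw [hsplit]
    refine Δ.add_mem (rho_mul_mem (Dn_le n hmem)) (mem_D.2 ⟨-1, 1 + l + m, ?_⟩)
    rw [a]; push_cast
    linear_combination (-(l:ℂ)/3) * hρ0
  · exact mkGn_eq.2 hmem

lemma e23 (n : ℕ) (hn : 0 < n) :
    E2 n ∩ E3 n = Set.range (fun lm : Fin 3 × Fin n => P n lm.1 lm.2) := by
  have hne3 : ρ ^ 2 - ρ ≠ 0 := by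
    intro h
    have h' : ρ * (ρ - 1) = 0 := by linear_combination h
    rcases mul_eq_zero.1 h' with h'' | h''
    · rw [ρ] at h''; exact Complex.exp_ne_zero _ h''
    · exact hρne (sub_eq_zero.1 h'')
  have hnz : (0:ℤ) < (n:ℤ) := by exact_mod_cast hn
  ext x
  constructor
  · rintro ⟨⟨z, rfl⟩, w, hw⟩
    rw [Prod.mk.injEq] at hw
    have h1 : w - z ∈ Δn n := mkGn_eq.1 hw.2
    have h2 : (ρ ^ 2 * w - 2 * a) - (ρ * z - a) ∈ Δ := mkG_eq.1 hw.1
    have h3 : (ρ ^ 2 - ρ) * z - a ∈ Δ := by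
      have h4 : ρ ^ 2 * (w - z) ∈ Δ := rho2_mul_mem (Dn_le n h1)
      have h5 := Δ.sub_mem h2 h4
      have : (ρ ^ 2 - ρ) * z - a = ((ρ ^ 2 * w - 2 * a) - (ρ * z - a)) - ρ ^ 2 * (w - z) := by
        ring
      rw [this]; exact h5
    obtain ⟨p, q, hpq⟩ := mem_D.1 h3
    have hzval : z = (1 - 2*(q:ℂ) + p)/3 + ((1 - (q:ℂ) + 2*p)/3) * ρ := by
      apply mul_left_cancel₀ hne3
      rw [a] at hpq
      linear_combination hpq + ((3*(p:ℂ) + 1)/3 + (-(1 - (q:ℂ) + 2*p)/3) * ρ) * hρ0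
    set l : ℤ := (-1 + q - 2*p) % 3 with hl
    set c : ℤ := (-1 + q - 2*p) / 3 with hc
    set m : ℤ := (p - q) % n with hm
    set d : ℤ := (p - q) / n with hd
    have hl0 : 0 ≤ l := Int.emod_nonneg _ (by norm_num)
    have hl3 : l < 3 := Int.emod_lt_of_pos _ (by norm_num)
    have hm0 : 0 ≤ m := Int.emod_nonneg _ (by omega)
    have hmn : m < n := Int.emod_lt_of_pos _ hnz
    have hmrel : p - q = (n:ℤ) * d + m := by
      rw [hm, hd]; exact (Int.mul_ediv_add_emod _ _).symm
    apply point_eq_P' n hn z l m hl0 hl3 hm0 hmn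
    refine mem_Dn.2 ⟨d, c, ?_⟩
    have hlC : (l:ℂ) = -1 + (q:ℂ) - 2*p - 3*c := by
      have h' : l = -1 + q - 2*p - 3*c := by rw [hl, hc]; omega
      rw [h']; push_cast; ring
    have hmC : (m:ℂ) = (p:ℂ) - q - n*d := by
      have h' : m = p - q - n*d := by omega
      rw [h']; push_cast; ring
    rw [hzval, a, hlC, hmC]; ring
  · rintro ⟨⟨l, m⟩, rfl⟩
    exact ⟨P_mem_E2 n l m, P_mem_E3 n l m⟩


/-- The `3n` points `P_{l,m}` are pairwise distinct; consequently each pairwise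
intersection `E_i ∩ E_j` (`i ≠ j`) is finite of cardinality exactly `3n`. -/
theorem stmt9 (n : ℕ) (hn : 0 < n) :
    Function.Injective (fun lm : Fin 3 × Fin n => P n lm.1 lm.2) ∧
    (E1 n ∩ E2 n).Finite ∧ (E1 n ∩ E2 n).ncard = 3 * n ∧
    (E1 n ∩ E3 n).Finite ∧ (E1 n ∩ E3 n).ncard = 3 * n ∧
    (E2 n ∩ E3 n).Finite ∧ (E2 n ∩ E3 n).ncard = 3 * n := by
  have hinj := P_inj n
  have hcard : (Set.range (fun lm : Fin 3 × Fin n => P n lm.1 lm.2)).ncard = 3 * n := by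
    rw [← Nat.card_coe_set_eq, Nat.card_range_of_injective hinj]
    simp [Nat.card_eq_fintype_card]
  refine ⟨hinj, ?_, ?_, ?_, ?_, ?_, ?_⟩
  · rw [e12 n hn]; exact Set.finite_range _
  · rw [e12 n hn]; exact hcard
  · rw [e13 n hn]; exact Set.finite_range _
  · rw [e13 n hn]; exact hcard
  · rw [e23 n hn]; exact Set.finite_range _
  · rw [e23 n hn]; exact hcard
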